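/- Let R be a commutative ring, n ≥ 3, and A, B two ideals of R. Then [E(n,R,A), GL(n,R,B)] = [E(n,R,A), E(n,R,B)], where GL(n,R,B) is the principal congruence subgroup of level B. -/

import Mathlib

open Matrix

/-- The elementary transvection `t_{ij}(c) = 1 + c e_{ij}` as an element of `GL(n,R)`. -/
def transvectionGL (R : Type*) [CommRing R] (N : ℕ) (i j : Fin N) (hij : i ≠ j) (c : R) :
    GL (Fin N) R :=
  ⟨Matrix.transvection i j c, Matrix.transvection i j (-c),
    by rw [Matrix.transvection_mul_transvection_same i j hij, add_neg_cancel,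
      Matrix.transvection_zero],
    by rw [Matrix.transvection_mul_transvection_same i j hij, neg_add_cancel,
      Matrix.transvection_zero]⟩

/-- `E(n,I)`: the subgroup of `GL(n,R)` generated by the elementary transvections
`t_{ij}(c)` with `c ∈ I`, `i ≠ j`. -/
def elementarySubgroup (R : Type*) [CommRing R] (N : ℕ) (I : Ideal R) :
    Subgroup (GL (Fin N) R) :=
  Subgroup.closure
    { g | ∃ (i j : Fin N) (hij : i ≠ j) (c : R), c ∈ I ∧ g = transvectionGL R N i j hij c }

/-- `E(n,R,I)`: the relative elementary subgroup of level `I`, the normal closure of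
`E(n,I)` in the (absolute) elementary group `E(n,R) = E(n, (⊤ : Ideal R))`. -/
def relativeElementarySubgroup (R : Type*) [CommRing R] (N : ℕ) (I : Ideal R) :
    Subgroup (GL (Fin N) R) :=
  Subgroup.closure
    { g | ∃ e ∈ elementarySubgroup R N I, ∃ u ∈ elementarySubgroup R N (⊤ : Ideal R),
        g = u * e * u⁻¹ }

/-- `GL(n,R,I)`: the principal congruence subgroup of level `I`, the kernel of the
reduction homomorphism `GL(n,R) → GL(n,R/I)`. -/
def congruenceSubgroup (R : Type*) [CommRing R] (N : ℕ) (I : Ideal R) :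
    Subgroup (GL (Fin N) R) :=
  (Units.map ((Ideal.Quotient.mk I).mapMatrix.toMonoidHom :
    Matrix (Fin N) (Fin N) R →* Matrix (Fin N) (Fin N) (R ⧸ I))).ker

/-!
`⊇` holds as `E(n,R,B) ≤ GL(n,R,B)`. For `⊆`, the group `T = [E(n,R,A), E(n,R,B)]` is normalised
by `E(n,R)` and contains every `t_kl(c)` with `c ∈ AB` (Steinberg relations, using `n ≥ 3`), so
commutator identities reduce the claim to `[t_ij(a), g] ∈ T` for `a ∈ A`, `g ∈ GL(n,R,B)`.
With `u` the `i`-th column of `g` and `v` the `j`-th row of `g⁻¹`,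
`[t_ij(a), g] = t_ij(a) (1 - a u vᵀ)`.

A rank one unipotent `1 + u zᵀ` with `zᵀu = 0` and `z_m = 0` factors as
`[1 + w e_mᵀ, 1 + e_m zᵀ] (1 + u_m e_m zᵀ)` with `w = u - u_m e_m`; if `z` has entries in `AB`,
this lies in `T`. Since `u` is unimodular, Suslin's decomposition writes any `z ⊥ u` as a sum of
vectors orthogonal to `u` supported on two coordinates, so a third coordinate vanishes. This handles
`-a v` up to a term supported on `{i, j}`, which `t_ij(a)` cancels modulo `T`.
-/

open scoped commutatorElement

namespace Matrix.GeneralLinearGroup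

variable {n R : Type*} [Fintype n] [DecidableEq n] [CommRing R]

def unipotent (X : Matrix n n R) (hX : X * X = 0) : GL n R :=
  ⟨1 + X, 1 - X, by simp [mul_sub, add_mul, hX], by simp [sub_mul, mul_add, hX]⟩

@[simp]
lemma val_unipotent (X : Matrix n n R) (hX : X * X = 0) :
    (unipotent X hX : Matrix n n R) = 1 + X := rfl

@[simp]
lemma val_inv_unipotent (X : Matrix n n R) (hX : X * X = 0) :
    ((unipotent X hX)⁻¹ : GL n R) = (1 - X : Matrix n n R) := rfl

lemma unipotent_zero : unipotent (0 : Matrix n n R) (mul_zero 0) = 1 := by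
  ext : 1; simp

lemma unipotent_mul_unipotent {X Y : Matrix n n R} (hX : X * X = 0) (hY : Y * Y = 0)
    (hXY : X * Y = 0) (hYX : Y * X = 0) :
    unipotent X hX * unipotent Y hY =
      unipotent (X + Y) (by simp [add_mul, mul_add, hX, hY, hXY, hYX]) := by
  ext : 1
  simp [add_mul, mul_add, hXY, add_assoc]

lemma commutatorElement_unipotent {X Y : Matrix n n R} (hX : X * X = 0) (hY : Y * Y = 0)
    (hYX : Y * X = 0) :
    ⁅unipotent X hX, unipotent Y hY⁆ =
      unipotent (X * Y) (by rw [mul_assoc, ← mul_assoc Y, hYX, zero_mul, mul_zero]) := by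
  ext : 1
  simp only [commutatorElement_def, Units.val_mul, val_unipotent, val_inv_unipotent]
  simp only [mul_add, add_mul, sub_mul, mul_sub, one_mul, mul_one, mul_assoc, hX, hY, hYX,
    mul_zero, add_zero]
  abel

lemma conj_unipotent (g : GL n R) {X : Matrix n n R} (hX : X * X = 0) :
    g * unipotent X hX * g⁻¹ =
      unipotent ((g : Matrix n n R) * X * ((g⁻¹ : GL n R) : Matrix n n R)) (by
        simp only [mul_assoc, Units.inv_mul_cancel_left, ← mul_assoc X X, hX, zero_mul,
          mul_zero]) := by
  ext : 1
  simp [mul_add, add_mul]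

lemma unipotent_mem_of_sum {S : Subgroup (GL n R)} {ι : Type*} (s : Finset ι)
    (X : ι → Matrix n n R) (hX : ∀ p ∈ s, ∀ q ∈ s, X p * X q = 0)
    (hS : ∀ p (hp : p ∈ s), unipotent (X p) (hX p hp p hp) ∈ S)
    {Y : Matrix n n R} (hY : Y * Y = 0) (hsum : ∑ p ∈ s, X p = Y) :
    unipotent Y hY ∈ S := by
  classical
  subst hsum
  induction s using Finset.induction_on with
  | empty => simp [unipotent_zero]
  | insert p s hp ih =>
    have hp' := Finset.mem_insert_self p s
    have hX' : ∀ q ∈ s, ∀ r ∈ s, X q * X r = 0 := fun q hq r hr =>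
      hX q (Finset.mem_insert_of_mem hq) r (Finset.mem_insert_of_mem hr)
    have hsq : (∑ q ∈ s, X q) * ∑ q ∈ s, X q = 0 := by
      simp only [Finset.sum_mul, Finset.mul_sum]
      exact Finset.sum_eq_zero fun q hq => Finset.sum_eq_zero fun r hr => hX' r hr q hq
    have hps : X p * ∑ q ∈ s, X q = 0 := by
      rw [Finset.mul_sum]
      exact Finset.sum_eq_zero fun q hq => hX p hp' q (Finset.mem_insert_of_mem hq)
    have hsp : (∑ q ∈ s, X q) * X p = 0 := by
      rw [Finset.sum_mul]
      exact Finset.sum_eq_zero fun q hq => hX q (Finset.mem_insert_of_mem hq) p hp'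
    convert S.mul_mem (hS p hp') (ih hX' (fun q hq => hS q (Finset.mem_insert_of_mem hq)) hsq)
      using 1
    rw [unipotent_mul_unipotent _ hsq hps hsp]
    ext : 1
    simp [Finset.sum_insert hp]

omit [Fintype n] in
lemma vecMulVec_single_single (i j : n) (c d : R) :
    vecMulVec (Pi.single i c) (Pi.single j d) = single i j (c * d) := by
  ext k l
  simp only [vecMulVec_apply, single_apply, Pi.single_apply]
  split_ifs <;> simp_all

def rankOne (u z : n → R) (h : z ⬝ᵥ u = 0) : GL n R :=
  unipotent (vecMulVec u z) (by rw [vecMulVec_mul_vecMulVec, h, zero_smul, vecMulVec_zero])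

@[simp]
lemma val_rankOne (u z : n → R) (h : z ⬝ᵥ u = 0) :
    (rankOne u z h : Matrix n n R) = 1 + vecMulVec u z := rfl

lemma rankOne_mul_rankOne (u z z' : n → R) (hz : z ⬝ᵥ u = 0) (hz' : z' ⬝ᵥ u = 0) :
    rankOne u z hz * rankOne u z' hz' =
      rankOne u (z + z') (by rw [add_dotProduct, hz, hz', add_zero]) := by
  rw [rankOne, rankOne, unipotent_mul_unipotent]
  · ext : 1
    simp [vecMulVec_add]
  · rw [vecMulVec_mul_vecMulVec, hz, zero_smul, vecMulVec_zero]
  · rw [vecMulVec_mul_vecMulVec, hz', zero_smul, vecMulVec_zero]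

lemma rankOne_eq_commutatorElement_mul (u z : n → R) (m : n) (hzm : z m = 0)
    (h : z ⬝ᵥ u = 0) :
    rankOne u z h =
      ⁅rankOne (u - Pi.single m (u m)) (Pi.single m 1) (by simp),
        rankOne (Pi.single m 1) z (by simp [hzm])⁆ *
      rankOne (Pi.single m (u m)) z (by simp [hzm]) := by
  have hzw : z ⬝ᵥ (u - Pi.single m (u m)) = 0 := by simp [dotProduct_sub, h, hzm]
  simp only [rankOne]
  rw [commutatorElement_unipotent, unipotent_mul_unipotent]
  · ext : 1
    simp [vecMulVec_mul_vecMulVec, ← add_vecMulVec]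
  all_goals simp [vecMulVec_mul_vecMulVec, hzm, hzw]

/-- Suslin's decomposition. -/
lemma sum_smul_single_sub_single_eq_self (u θ z : n → R) (hθ : θ ⬝ᵥ u = 1) (hz : z ⬝ᵥ u = 0) :
    ∑ p : n × n, (z p.1 * θ p.2) • (u p.2 • Pi.single p.1 1 - u p.1 • Pi.single p.2 1) = z := by
  ext s
  have h1 : ∑ l, z s * θ l * u l = z s * (θ ⬝ᵥ u) := by
    simp [dotProduct, Finset.mul_sum, mul_assoc]
  have h2 : ∑ k, z k * θ s * u k = (z ⬝ᵥ u) * θ s := by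
    simp [dotProduct, Finset.sum_mul, mul_right_comm _ (θ s)]
  simp [Finset.sum_apply, Pi.single_apply, Fintype.sum_prod_type, Finset.sum_sub_distrib, mul_sub,
    h1, h2, hθ, hz]

end Matrix.GeneralLinearGroup

namespace Subgroup

variable {G : Type*} [Group G]

lemma le_normalizer_commutator {K H₁ H₂ : Subgroup G} (h₁ : K ≤ normalizer (H₁ : Set G))
    (h₂ : K ≤ normalizer (H₂ : Set G)) : K ≤ normalizer ((⁅H₁, H₂⁆ : Subgroup G) : Set G) :=
  fun g hg => by
    rw [mem_normalizer_iff_map_conj_eq, map_commutator, mem_normalizer_iff_map_conj_eq.mp (h₁ hg),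
      mem_normalizer_iff_map_conj_eq.mp (h₂ hg)]

lemma commutator_closure_le {s : Set G} {H T : Subgroup G}
    (hs : closure s ≤ normalizer (T : Set G)) (h : ∀ x ∈ s, ∀ g ∈ H, ⁅x, g⁆ ∈ T) :
    ⁅closure s, H⁆ ≤ T := by
  rw [commutator_le]
  intro x hx g hg
  induction hx using closure_induction with
  | mem x hx => exact h x hx g hg
  | one => simp
  | mul x y hx _ ihx ihy =>
    rw [commutatorElement_mul_left_eq_conj_mul]
    exact mul_mem ((hs hx _).mp ihy) ihx
  | inv x hx ihx =>
    have := (hs (inv_mem hx) _).mp (inv_mem ihx)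
    rwa [commutatorElement_inv, inv_inv, ← commutatorElement_inv_left] at this

/-- Modulo `T`, the factors `p`, `y`, `y'` drop out, leaving `α * ⁅q, t⁆`. -/
lemma mul_commutatorElement_mem {T : Subgroup G} {α p q t y y' : G}
    (hα : α ∈ normalizer (T : Set G)) (hp : p ∈ normalizer (T : Set G))
    (hq : q ∈ normalizer (T : Set G)) (ht : t ∈ normalizer (T : Set G)) (hy : y ∈ T)
    (hy' : y' ∈ T) (hαp : ⁅α, p⁆ ∈ T) (hpt : ⁅p, t⁆ ∈ T) (hαqt : α * ⁅q, t⁆ ∈ T) :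
    α * ⁅p * q, y * (t * y')⁆ ∈ T := by
  have conj : ∀ {x z : G}, x ∈ normalizer (T : Set G) → z ∈ T → x * z * x⁻¹ ∈ T :=
    fun hx hz => (hx _).mp hz
  have comm : ∀ {x z : G}, x ∈ normalizer (T : Set G) → z ∈ T → ⁅x, z⁆ ∈ T :=
    fun hx hz => mul_mem (conj hx hz) (inv_mem hz)
  have hpq : α * ⁅p * q, t⁆ ∈ T := by
    have e : α * ⁅p * q, t⁆ = ⁅α, p⁆ * (p * (α * ⁅q, t⁆) * p⁻¹) * ⁅p, t⁆ := by
      simp only [commutatorElement_def]; group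
    rw [e]
    exact mul_mem (mul_mem hαp (conj hp hαqt)) hpt
  have hty' : α * ⁅p * q, t * y'⁆ ∈ T := by
    have e : α * ⁅p * q, t * y'⁆ = (α * ⁅p * q, t⁆) * (t * ⁅p * q, y'⁆ * t⁻¹) := by
      simp only [commutatorElement_def]; group
    rw [e]
    exact mul_mem hpq (conj ht (comm (mul_mem hp hq) hy'))
  have e : α * ⁅p * q, y * (t * y')⁆ =
      (α * ⁅p * q, y⁆ * α⁻¹) * ⁅α, y⁆ * (y * (α * ⁅p * q, t * y'⁆) * y⁻¹) := by
    simp only [commutatorElement_def]; group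
  rw [e]
  exact mul_mem (mul_mem (conj hα (comm (mul_mem hp hq) hy)) (comm hα hy))
    (conj (le_normalizer hy) hty')

end Subgroup

open Matrix.GeneralLinearGroup

section Elementary

variable {R : Type*} [CommRing R] {N : ℕ}

section Transvections

@[simp]
lemma val_transvectionGL {i j : Fin N} (hij : i ≠ j) (c : R) :
    (transvectionGL R N i j hij c : Matrix (Fin N) (Fin N) R) = transvection i j c := rfl

lemma transvectionGL_eq_unipotent {i j : Fin N} (hij : i ≠ j) (c : R) :
    transvectionGL R N i j hij c = unipotent (single i j c) (by simp [hij.symm]) := by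
  ext : 1
  rfl

lemma transvectionGL_inv {i j : Fin N} (hij : i ≠ j) (c : R) :
    (transvectionGL R N i j hij c)⁻¹ = transvectionGL R N i j hij (-c) := by
  ext : 1
  rfl

lemma transvectionGL_mul_transvectionGL {i j : Fin N} (hij : i ≠ j) (c d : R) :
    transvectionGL R N i j hij c * transvectionGL R N i j hij d =
      transvectionGL R N i j hij (c + d) := by
  ext : 1
  exact transvection_mul_transvection_same i j hij c d

lemma commutatorElement_transvectionGL {k l m : Fin N} (hkm : k ≠ m) (hml : m ≠ l)
    (hkl : k ≠ l) (c d : R) :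
    ⁅transvectionGL R N k m hkm c, transvectionGL R N m l hml d⁆ =
      transvectionGL R N k l hkl (c * d) := by
  simp only [transvectionGL_eq_unipotent]
  rw [commutatorElement_unipotent _ _ (by simp [hkl.symm])]
  simp only [single_mul_single_same]

lemma rankOne_single_left_eq_mul {i j m : Fin N} (hmi : m ≠ i) (hmj : m ≠ j) (c d : R)
    (h : (Pi.single i c - Pi.single j d : Fin N → R) ⬝ᵥ Pi.single m 1 = 0) :
    rankOne (Pi.single m 1) (Pi.single i c - Pi.single j d) h =
      transvectionGL R N m i hmi c * transvectionGL R N m j hmj (-d) := by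
  ext : 1
  simp [transvection, mul_add, add_mul, vecMulVec_sub, vecMulVec_single_single, hmi.symm,
    ← single_neg]
  abel

lemma rankOne_single_right_eq_mul {i m : Fin N} (him : i ≠ m) {w : Fin N → R} (hwm : w m = 0)
    (h : Pi.single m 1 ⬝ᵥ w = 0) :
    rankOne w (Pi.single m 1) h =
      rankOne (w - Pi.single i (w i)) (Pi.single m 1) (by simp [hwm, him.symm]) *
        transvectionGL R N i m him (w i) := by
  have hrow : (single i m (w i)).row m = 0 := by
    ext l
    exact single_apply_of_row_ne him m l (w i)
  ext : 1
  simp [transvection, mul_add, add_mul, sub_mul, vecMulVec_mul, sub_vecMulVec,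
    vecMulVec_single_single, hrow, him.symm]
  abel

lemma conj_transvectionGL (g : GL (Fin N) R) {i j : Fin N} (hij : i ≠ j) (c : R)
    (h : (c • ((g⁻¹ : GL (Fin N) R) : Matrix (Fin N) (Fin N) R).row j) ⬝ᵥ
      (g : Matrix (Fin N) (Fin N) R).col i = 0) :
    (g * transvectionGL R N i j hij c * g⁻¹ : GL (Fin N) R) =
      rankOne ((g : Matrix (Fin N) (Fin N) R).col i)
        (c • ((g⁻¹ : GL (Fin N) R) : Matrix (Fin N) (Fin N) R).row j) h := by
  rw [transvectionGL_eq_unipotent, conj_unipotent]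
  ext : 1
  simp only [val_unipotent, val_rankOne]
  rw [← one_mul c, ← vecMulVec_single_single, mul_vecMulVec, vecMulVec_mul, one_mul,
    mulVec_single_one, single_vecMul]

lemma exists_ne_and_ne (hN : 3 ≤ N) (k l : Fin N) : ∃ m : Fin N, m ≠ k ∧ m ≠ l := by
  obtain ⟨m, -, hm⟩ := Finset.exists_mem_notMem_of_card_lt_card
    (s := ({k, l} : Finset (Fin N))) (t := Finset.univ)
    (Finset.card_le_two.trans_lt (by simp; omega))
  exact ⟨m, by simpa [not_or] using hm⟩

end Transvections

section ElementarySubgroups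

lemma transvectionGL_mem_elementarySubgroup {I : Ideal R} {i j : Fin N} (hij : i ≠ j) {c : R}
    (hc : c ∈ I) : transvectionGL R N i j hij c ∈ elementarySubgroup R N I :=
  Subgroup.subset_closure ⟨i, j, hij, c, hc, rfl⟩

lemma elementarySubgroup_mono {I J : Ideal R} (h : I ≤ J) :
    elementarySubgroup R N I ≤ elementarySubgroup R N J :=
  Subgroup.closure_mono fun _ ⟨i, j, hij, c, hc, hg⟩ => ⟨i, j, hij, c, h hc, hg⟩

lemma elementarySubgroup_le_relativeElementarySubgroup (I : Ideal R) :
    elementarySubgroup R N I ≤ relativeElementarySubgroup R N I := fun e he =>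
  Subgroup.subset_closure ⟨e, he, 1, one_mem _, by simp⟩

lemma relativeElementarySubgroup_le_elementarySubgroup_top (I : Ideal R) :
    relativeElementarySubgroup R N I ≤ elementarySubgroup R N ⊤ := by
  rw [relativeElementarySubgroup, Subgroup.closure_le]
  rintro _ ⟨e, he, u, hu, rfl⟩
  exact mul_mem (mul_mem hu (elementarySubgroup_mono le_top he)) (inv_mem hu)

lemma elementarySubgroup_top_le_normalizer_relativeElementarySubgroup (I : Ideal R) :
    elementarySubgroup R N ⊤ ≤ Subgroup.normalizer (relativeElementarySubgroup R N I : Set _) := by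
  refine Subgroup.le_normalizer_closure_iff.mpr ?_
  rintro h hh _ ⟨e, he, u, hu, rfl⟩
  exact Subgroup.subset_closure ⟨e, he, h * u, mul_mem hh hu, by group⟩

lemma elementarySubgroup_top_le_normalizer_commutator (A B : Ideal R) :
    elementarySubgroup R N ⊤ ≤ Subgroup.normalizer
      ((⁅relativeElementarySubgroup R N A, relativeElementarySubgroup R N B⁆ : Subgroup _) :
        Set _) :=
  Subgroup.le_normalizer_commutator
    (elementarySubgroup_top_le_normalizer_relativeElementarySubgroup A)
    (elementarySubgroup_top_le_normalizer_relativeElementarySubgroup B)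

lemma elementarySubgroup_mul_le_commutator (hN : 3 ≤ N) (A B : Ideal R) :
    elementarySubgroup R N (A * B) ≤
      ⁅relativeElementarySubgroup R N A, relativeElementarySubgroup R N B⁆ := by
  rw [elementarySubgroup, Subgroup.closure_le]
  rintro _ ⟨k, l, hkl, c, hc, rfl⟩
  refine Submodule.mul_induction_on hc (fun a ha b hb => ?_) (fun x y hx hy => ?_)
  · obtain ⟨m, hmk, hml⟩ := exists_ne_and_ne hN k l
    rw [← commutatorElement_transvectionGL hmk.symm hml hkl]
    exact Subgroup.commutator_mem_commutator
      (elementarySubgroup_le_relativeElementarySubgroup A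
        (transvectionGL_mem_elementarySubgroup _ ha))
      (elementarySubgroup_le_relativeElementarySubgroup B
        (transvectionGL_mem_elementarySubgroup _ hb))
  · rw [← transvectionGL_mul_transvectionGL]
    exact mul_mem hx hy

lemma rankOne_single_left_mem_elementarySubgroup {I : Ideal R} {m : Fin N} {c : R}
    {z : Fin N → R} (hzm : z m = 0) (hz : ∀ s, c * z s ∈ I) (h : z ⬝ᵥ Pi.single m c = 0) :
    rankOne (Pi.single m c) z h ∈ elementarySubgroup R N I := by
  refine unipotent_mem_of_sum Finset.univ (fun s => single m s (c * z s)) ?_ (fun s _ => ?_) _ ?_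
  · intro p _ q _
    by_cases hp : p = m
    · subst hp; simp [hzm]
    · simp [hp]
  · by_cases hs : s = m
    · subst hs
      convert (elementarySubgroup R N I).one_mem
      ext : 1
      simp [hzm]
    · rw [← transvectionGL_eq_unipotent (Ne.symm hs)]
      exact transvectionGL_mem_elementarySubgroup _ (hz s)
  · ext k l
    simp [vecMulVec_apply, Pi.single_apply, single_apply, Matrix.sum_apply, ite_and, eq_comm]

lemma rankOne_single_right_mem_elementarySubgroup {I : Ideal R} {m : Fin N} {c : R}
    {w : Fin N → R} (hwm : w m = 0) (hw : ∀ s, w s * c ∈ I) (h : Pi.single m c ⬝ᵥ w = 0) :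
    rankOne w (Pi.single m c) h ∈ elementarySubgroup R N I := by
  refine unipotent_mem_of_sum Finset.univ (fun s => single s m (w s * c)) ?_ (fun s _ => ?_) _ ?_
  · intro p _ q _
    by_cases hq : q = m
    · subst hq; simp [hwm]
    · simp [Ne.symm hq]
  · by_cases hs : s = m
    · subst hs
      convert (elementarySubgroup R N I).one_mem
      ext : 1
      simp [hwm]
    · rw [← transvectionGL_eq_unipotent hs]
      exact transvectionGL_mem_elementarySubgroup _ (hw s)
  · ext k l
    simp [vecMulVec_apply, Pi.single_apply, single_apply, Matrix.sum_apply, ite_and, eq_comm]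

end ElementarySubgroups

section Congruence

instance (I : Ideal R) : (congruenceSubgroup R N I).Normal := MonoidHom.normal_ker _

lemma mem_congruenceSubgroup_iff {I : Ideal R} {g : GL (Fin N) R} :
    g ∈ congruenceSubgroup R N I ↔
      ∀ k l, (g : Matrix (Fin N) (Fin N) R) k l - (1 : Matrix (Fin N) (Fin N) R) k l ∈ I := by
  simp only [congruenceSubgroup, MonoidHom.mem_ker, Units.ext_iff, Units.coe_map,
    Units.val_one, ← Matrix.ext_iff, ← Ideal.Quotient.eq]
  simp [one_apply, apply_ite]

lemma elementarySubgroup_le_congruenceSubgroup (I : Ideal R) :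
    elementarySubgroup R N I ≤ congruenceSubgroup R N I := by
  rw [elementarySubgroup, Subgroup.closure_le]
  rintro _ ⟨i, j, hij, c, hc, rfl⟩
  refine mem_congruenceSubgroup_iff.mpr fun k l => ?_
  simp only [val_transvectionGL, transvection, Matrix.add_apply, add_sub_cancel_left,
    single_apply]
  split_ifs
  exacts [hc, I.zero_mem]

lemma relativeElementarySubgroup_le_congruenceSubgroup (I : Ideal R) :
    relativeElementarySubgroup R N I ≤ congruenceSubgroup R N I := by
  rw [relativeElementarySubgroup, Subgroup.closure_le]
  rintro _ ⟨e, he, u, -, rfl⟩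
  exact Subgroup.Normal.conj_mem inferInstance e (elementarySubgroup_le_congruenceSubgroup I he) u

end Congruence

section RankOne

variable {S : Subgroup (GL (Fin N) R)} {I : Ideal R}

lemma rankOne_mem_of_apply_eq_zero (hS : elementarySubgroup R N ⊤ ≤ Subgroup.normalizer (S : Set _))
    (hI : elementarySubgroup R N I ≤ S) {u z : Fin N → R} {m : Fin N} (hzm : z m = 0)
    (hz : ∀ s, z s ∈ I) (h : z ⬝ᵥ u = 0) : rankOne u z h ∈ S := by
  rw [rankOne_eq_commutatorElement_mul u z m hzm h]
  refine mul_mem (Subgroup.le_normalizer_iff_commutator_le_right.mp hS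
    (Subgroup.commutator_mem_commutator ?_ (hI ?_))) (hI ?_)
  · exact rankOne_single_right_mem_elementarySubgroup (by simp) (fun _ => Submodule.mem_top) _
  · exact rankOne_single_left_mem_elementarySubgroup hzm (by simpa using hz) _
  · exact rankOne_single_left_mem_elementarySubgroup hzm (fun s => I.mul_mem_left _ (hz s)) _

lemma rankOne_mem_of_dotProduct_eq_one (hN : 3 ≤ N)
    (hS : elementarySubgroup R N ⊤ ≤ Subgroup.normalizer (S : Set _))
    (hI : elementarySubgroup R N I ≤ S) {u θ z : Fin N → R} (hθ : θ ⬝ᵥ u = 1)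
    (hz : ∀ s, z s ∈ I) (h : z ⬝ᵥ u = 0) : rankOne u z h ∈ S := by
  set ζ : Fin N × Fin N → Fin N → R :=
    fun p => (z p.1 * θ p.2) • (u p.2 • Pi.single p.1 1 - u p.1 • Pi.single p.2 1)
  have hζ : ∀ p, ζ p ⬝ᵥ u = 0 := fun p => by
    simp only [ζ, smul_dotProduct, sub_dotProduct, single_dotProduct, smul_eq_mul]
    ring
  refine unipotent_mem_of_sum Finset.univ (fun p => vecMulVec u (ζ p))
    (fun p _ q _ => by rw [vecMulVec_mul_vecMulVec, hζ, zero_smul, vecMulVec_zero])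
    (fun p _ => ?_) _ ?_
  · obtain ⟨m, hm₁, hm₂⟩ := exists_ne_and_ne hN p.1 p.2
    refine rankOne_mem_of_apply_eq_zero hS hI (m := m) (by simp [ζ, hm₁, hm₂]) (fun s => ?_)
      (hζ p)
    exact I.mul_mem_right _ (I.mul_mem_right _ (hz p.1))
  · conv_rhs => rw [← sum_smul_single_sub_single_eq_self u θ z hθ h]
    ext k l
    simp only [vecMulVec_apply, Matrix.sum_apply, Finset.sum_apply, Finset.mul_sum, ζ]

end RankOne

section Commutator

variable {A B : Ideal R}

lemma transvectionGL_mul_commutatorElement_mem (hN : 3 ≤ N) {i j m : Fin N} (hij : i ≠ j)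
    (hmi : m ≠ i) (hmj : m ≠ j) {a c d : R} (ha : a ∈ A) (hc : c ∈ A * B) (hd : d - a ∈ A * B)
    {u : Fin N → R} (hu : ∀ k, k ≠ i → u k ∈ B) (hui : u i - 1 ∈ B) :
    transvectionGL R N i j hij a *
        ⁅rankOne (u - Pi.single m (u m)) (Pi.single m 1) (by simp),
          rankOne (Pi.single m 1) (Pi.single i c - Pi.single j d) (by simp [hmi.symm, hmj.symm])⁆ ∈
      ⁅relativeElementarySubgroup R N A, relativeElementarySubgroup R N B⁆ := by
  have hT := elementarySubgroup_top_le_normalizer_commutator (N := N) A B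
  have hAB := elementarySubgroup_mul_le_commutator hN A B
  have hE : ∀ {c : R} {k l : Fin N} (hkl : k ≠ l),
      transvectionGL R N k l hkl c ∈ elementarySubgroup R N ⊤ := fun hkl =>
    transvectionGL_mem_elementarySubgroup hkl Submodule.mem_top
  have hA : ∀ {c : R} {k l : Fin N} (hkl : k ≠ l), c ∈ A →
      transvectionGL R N k l hkl c ∈ relativeElementarySubgroup R N A := fun hkl hc =>
    elementarySubgroup_le_relativeElementarySubgroup A
      (transvectionGL_mem_elementarySubgroup hkl hc)
  have hp : ∀ h, rankOne (u - Pi.single m (u m) - Pi.single i (u i)) (Pi.single m 1) h ∈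
      relativeElementarySubgroup R N B := fun h => by
    refine elementarySubgroup_le_relativeElementarySubgroup B
      (rankOne_single_right_mem_elementarySubgroup (by simp [hmi]) (fun s => ?_) _)
    by_cases hsi : s = i
    · simp [hsi, hmi.symm]
    by_cases hsm : s = m
    · simp [hsm, hmi]
    · simpa [hsi, hsm] using hu s hsi
  have hwi : (u - Pi.single m (u m) : Fin N → R) i = u i := by simp [hmi.symm]
  rw [rankOne_single_right_eq_mul hmi.symm (by simp), rankOne_single_left_eq_mul hmi hmj,
    show -d = -a + -(d - a) by ring, ← transvectionGL_mul_transvectionGL]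
  simp only [hwi]
  refine Subgroup.mul_commutatorElement_mem (hT (hE hij))
    (hT (relativeElementarySubgroup_le_elementarySubgroup_top B (hp _))) (hT (hE _)) (hT (hE _))
    (hAB (transvectionGL_mem_elementarySubgroup _ hc))
    (hAB (transvectionGL_mem_elementarySubgroup _ (neg_mem hd)))
    (Subgroup.commutator_mem_commutator (hA hij ha) (hp _)) ?_ ?_
  · rw [← commutatorElement_inv]
    exact inv_mem (Subgroup.commutator_mem_commutator (hA hmj (A.neg_mem ha)) (hp _))
  · rw [commutatorElement_transvectionGL hmi.symm hmj hij, transvectionGL_mul_transvectionGL]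
    refine hAB (transvectionGL_mem_elementarySubgroup _ ?_)
    have e : a + u i * -a = a * -(u i - 1) := by ring
    exact e ▸ Ideal.mul_mem_mul ha (B.neg_mem hui)

/-- The part of `g t_ij(-a) g⁻¹` that is not congruent to `1` modulo `AB` is cancelled by
`t_ij(a)`. -/
lemma transvectionGL_mul_rankOne_mem (hN : 3 ≤ N) {i j : Fin N} (hij : i ≠ j) {a : R}
    (ha : a ∈ A) {u : Fin N → R} (hu : ∀ k, k ≠ i → u k ∈ B) (hui : u i - 1 ∈ B)
    (h : (Pi.single i (a * u j) - Pi.single j (a * u i) : Fin N → R) ⬝ᵥ u = 0) :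
    transvectionGL R N i j hij a * rankOne u (Pi.single i (a * u j) - Pi.single j (a * u i)) h ∈
      ⁅relativeElementarySubgroup R N A, relativeElementarySubgroup R N B⁆ := by
  obtain ⟨m, hmi, hmj⟩ := exists_ne_and_ne hN i j
  set ζ : Fin N → R := Pi.single i (a * u j) - Pi.single j (a * u i)
  have hζm : ζ m = 0 := by simp [ζ, hmi, hmj]
  rw [rankOne_eq_commutatorElement_mul u ζ m hζm h, ← mul_assoc]
  refine mul_mem (transvectionGL_mul_commutatorElement_mem hN hij hmi hmj ha
    (Ideal.mul_mem_mul ha (hu j hij.symm)) (by simpa [← mul_sub_one] using Ideal.mul_mem_mul ha hui)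
    hu hui)
    (elementarySubgroup_mul_le_commutator hN A B
      (rankOne_single_left_mem_elementarySubgroup hζm (fun s => ?_) _))
  have e : u m * ζ s = a * (u m * (Pi.single i (u j) - Pi.single j (u i) : Fin N → R) s) := by
    simp only [ζ, Pi.sub_apply, Pi.single_apply]
    split_ifs <;> ring
  rw [e]
  exact Ideal.mul_mem_mul ha (B.mul_mem_right _ (hu m hmi))

lemma transvectionGL_mul_rankOne_smul_mem (hN : 3 ≤ N) {i j : Fin N} (hij : i ≠ j) {a : R}
    (ha : a ∈ A) {u v θ : Fin N → R} (hθ : θ ⬝ᵥ u = 1) (hu : ∀ k, k ≠ i → u k ∈ B)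
    (hui : u i - 1 ∈ B) (hv : ∀ l, l ≠ j → v l ∈ B) (hvj : v j - 1 ∈ B)
    (h : (-a • v) ⬝ᵥ u = 0) :
    transvectionGL R N i j hij a * rankOne u (-a • v) h ∈
      ⁅relativeElementarySubgroup R N A, relativeElementarySubgroup R N B⁆ := by
  -- `u ≡ e_i` and `v ≡ e_j` modulo `B`, so `-a • v - ζ` has entries in `AB`
  set ζ : Fin N → R := Pi.single i (a * u j) - Pi.single j (a * u i)
  set ρ : Fin N → R := -a • v - ζ
  have hζ : ζ ⬝ᵥ u = 0 := by simp [ζ, sub_dotProduct]; ring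
  have hρ : ρ ⬝ᵥ u = 0 := by simp only [ρ, sub_dotProduct, h, hζ, sub_zero]
  have hρAB : ∀ s, ρ s ∈ A * B := by
    intro s
    have e : ρ s = a * (-v s - (Pi.single i (u j) : Fin N → R) s +
        (Pi.single j (u i) : Fin N → R) s) := by
      simp only [ρ, ζ, Pi.sub_apply, Pi.smul_apply, smul_eq_mul, Pi.single_apply]
      split_ifs <;> ring
    rw [e]
    refine Ideal.mul_mem_mul ha ?_
    by_cases hsi : s = i
    · subst hsi
      simpa [hij] using B.sub_mem (B.neg_mem (hv s hij)) (hu j hij.symm)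
    by_cases hsj : s = j
    · subst hsj
      convert B.sub_mem hui hvj using 1
      simp [hsi]
      ring
    · simpa [hsi, hsj] using B.neg_mem (hv s hsj)
  have hsplit : rankOne u (-a • v) h = rankOne u ζ hζ * rankOne u ρ hρ := by
    simp only [rankOne_mul_rankOne, ρ, add_sub_cancel]
  rw [hsplit, ← mul_assoc]
  exact mul_mem (transvectionGL_mul_rankOne_mem hN hij ha hu hui hζ)
    (rankOne_mem_of_dotProduct_eq_one hN (elementarySubgroup_top_le_normalizer_commutator A B)
      (elementarySubgroup_mul_le_commutator hN A B) hθ hρAB hρ)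

lemma commutatorElement_transvectionGL_mem (hN : 3 ≤ N) {i j : Fin N} (hij : i ≠ j) {a : R}
    (ha : a ∈ A) {g : GL (Fin N) R} (hg : g ∈ congruenceSubgroup R N B) :
    ⁅transvectionGL R N i j hij a, g⁆ ∈
      ⁅relativeElementarySubgroup R N A, relativeElementarySubgroup R N B⁆ := by
  set u : Fin N → R := (g : Matrix (Fin N) (Fin N) R).col i
  set v : Fin N → R := ((g⁻¹ : GL (Fin N) R) : Matrix (Fin N) (Fin N) R).row j
  set θ : Fin N → R := ((g⁻¹ : GL (Fin N) R) : Matrix (Fin N) (Fin N) R).row i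
  have hvu : v ⬝ᵥ u = 0 := by
    have := congr_fun₂ (Units.inv_mul g) j i
    rwa [mul_apply', one_apply_ne hij.symm] at this
  have hθu : θ ⬝ᵥ u = 1 := by
    have := congr_fun₂ (Units.inv_mul g) i i
    rwa [mul_apply', one_apply_eq] at this
  have hgB := mem_congruenceSubgroup_iff.mp hg
  have hg'B := mem_congruenceSubgroup_iff.mp (inv_mem hg)
  have hav : (-a • v) ⬝ᵥ u = 0 := by rw [smul_dotProduct, hvu, smul_zero]
  have e : ⁅transvectionGL R N i j hij a, g⁆ =
      transvectionGL R N i j hij a * (g * transvectionGL R N i j hij (-a) * g⁻¹) := by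
    rw [commutatorElement_def, ← transvectionGL_inv]
    group
  rw [e, conj_transvectionGL g hij (-a) hav]
  refine transvectionGL_mul_rankOne_smul_mem hN hij ha hθu (fun k hk => ?_) ?_ (fun l hl => ?_) ?_
    hav
  · simpa [u, one_apply_ne hk] using hgB k i
  · simpa [u] using hgB i i
  · simpa [v, one_apply_ne hl.symm] using hg'B j l
  · simpa [v] using hg'B j j

end Commutator

end Elementary

/-- Theorem 3A (commutative case): `[E(n,R,A), GL(n,R,B)] = [E(n,R,A), E(n,R,B)]`
for `n ≥ 3`. -/
theorem relative_standard_commutator_formula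
    (R : Type*) [CommRing R] (N : ℕ) (hN : 3 ≤ N) (A B : Ideal R) :
    ⁅relativeElementarySubgroup R N A, congruenceSubgroup R N B⁆ =
      ⁅relativeElementarySubgroup R N A, relativeElementarySubgroup R N B⁆ := by
  refine le_antisymm ?_
    (Subgroup.commutator_mono le_rfl (relativeElementarySubgroup_le_congruenceSubgroup B))
  have hT := elementarySubgroup_top_le_normalizer_commutator (N := N) A B
  have hE : ⁅elementarySubgroup R N A, congruenceSubgroup R N B⁆ ≤
      ⁅relativeElementarySubgroup R N A, relativeElementarySubgroup R N B⁆ :=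
    Subgroup.commutator_closure_le ((elementarySubgroup_mono le_top).trans hT)
      fun _ ⟨_, _, hij, _, ha, he⟩ _ hg => he ▸ commutatorElement_transvectionGL_mem hN hij ha hg
  refine Subgroup.commutator_closure_le
    ((relativeElementarySubgroup_le_elementarySubgroup_top A).trans hT) ?_
  rintro _ ⟨e, he, w, hw, rfl⟩ g hg
  have hconj : ⁅w * e * w⁻¹, g⁆ = w * ⁅e, w⁻¹ * g * w⁻¹⁻¹⁆ * w⁻¹ := by
    simp only [commutatorElement_def]; group
  rw [hconj]
  exact (hT hw _).mp (Subgroup.commutator_le.mp hE e he _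
    (Subgroup.Normal.conj_mem inferInstance g hg w⁻¹))
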